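/- Let q be an odd prime power, a ∈ F_q nonzero, and let C, D ⊆ F_q^{m×n} be F_q-linear matrix codes. Then the dual of the Plotkin construction C ◊_a D with respect to the trace inner product ⟨X, Y⟩ = Tr(X Yᵀ) on F_q^{2m×2n} equals C^⊥ ◊_{a^{-1}} D^⊥, i.e. (C ◊_a D)^⊥ = C^⊥ ◊_{a^{-1}} D^⊥. -/
import Mathlib


/-- The dual of a matrix code with respect to the trace inner product
`⟨X, Y⟩ = Tr(X Yᵀ)`. -/
def matDual {F : Type*} [Field F] {m n : Type*} [Fintype m] [Fintype n]
    (C : Submodule F (Matrix m n F)) : Submodule F (Matrix m n F) where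
  carrier := {A | ∀ B ∈ C, Matrix.trace (A * B.transpose) = 0}
  add_mem' := by
    intro x y hx hy B hB
    simp [Matrix.add_mul, hx B hB, hy B hB]
  zero_mem' := by
    intro B hB
    simp
  smul_mem' := by
    intro c x hx B hB
    simp [Matrix.smul_mul, hx B hB]

open Matrix in
lemma mem_matDual_iff {F : Type*} [Field F] {m n : Type*} [Fintype m] [Fintype n]
    {C : Submodule F (Matrix m n F)} {A : Matrix m n F} :
    A ∈ matDual C ↔ ∀ B ∈ C, Matrix.trace (A * B.transpose) = 0 := Iff.rfl

lemma traceFromBlocks {F : Type*} [AddCommMonoid F] {k l : Type*} [Fintype k] [Fintype l]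
    (A : Matrix k k F) (B : Matrix k l F) (C : Matrix l k F) (D : Matrix l l F) :
    (Matrix.fromBlocks A B C D).trace = A.trace + D.trace := by
  simp [Matrix.trace, Matrix.diag, Fintype.sum_sum_type]

open Matrix in
lemma trBlocks {F : Type*} [CommRing F] {m n : ℕ}
    (X₁ X₂ X₃ X₄ Y₁ Y₂ Y₃ Y₄ : Matrix (Fin m) (Fin n) F) :
    Matrix.trace (Matrix.fromBlocks X₁ X₂ X₃ X₄ * (Matrix.fromBlocks Y₁ Y₂ Y₃ Y₄)ᵀ)
      = Matrix.trace (X₁ * Y₁ᵀ) + Matrix.trace (X₂ * Y₂ᵀ)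
        + Matrix.trace (X₃ * Y₃ᵀ) + Matrix.trace (X₄ * Y₄ᵀ) := by
  simp [Matrix.fromBlocks_transpose, Matrix.fromBlocks_multiply, traceFromBlocks]
  ring

open Matrix in
theorem stmt4 (F : Type*) [Field F] [Fintype F] (hq : Odd (Fintype.card F))
    (m n : ℕ) (a : F) (ha : a ≠ 0)
    (C D : Submodule F (Matrix (Fin m) (Fin n) F))
    (P Q : Submodule F (Matrix (Fin m ⊕ Fin m) (Fin n ⊕ Fin n) F))
    (hP : (P : Set (Matrix (Fin m ⊕ Fin m) (Fin n ⊕ Fin n) F)) =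
      {M | ∃ A₀ ∈ C, ∃ A₁ ∈ C, ∃ B₀ ∈ D, ∃ B₁ ∈ D,
        M = Matrix.fromBlocks (A₀ + B₀) (a • (A₁ - B₁)) (A₁ + B₁) (A₀ - B₀)})
    (hQ : (Q : Set (Matrix (Fin m ⊕ Fin m) (Fin n ⊕ Fin n) F)) =
      {M | ∃ A₀ ∈ matDual C, ∃ A₁ ∈ matDual C, ∃ B₀ ∈ matDual D, ∃ B₁ ∈ matDual D,
        M = Matrix.fromBlocks (A₀ + B₀) (a⁻¹ • (A₁ - B₁)) (A₁ + B₁) (A₀ - B₀)}) :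
    matDual P = Q := by
  have h2 : (2 : F) ≠ 0 := by
    intro h
    have hd : ringChar F ∣ 2 := ringChar.dvd (by exact_mod_cast h)
    have hp : (ringChar F).Prime := CharP.char_is_prime F (ringChar F)
    have h2' : ringChar F = 2 := (Nat.prime_dvd_prime_iff_eq hp Nat.prime_two).mp hd
    have hcard := FiniteField.even_card_iff_char_two.mp h2'
    rw [Nat.odd_iff] at hq
    omega
  ext M
  constructor
  · intro hM
    have hM' : ∀ B ∈ P, Matrix.trace (M * Bᵀ) = 0 := hM
    set M₁ := M.toBlocks₁₁ with hM₁
    set M₂ := M.toBlocks₁₂ with hM₂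
    set M₃ := M.toBlocks₂₁ with hM₃
    set M₄ := M.toBlocks₂₂ with hM₄
    have hMeq : M = Matrix.fromBlocks M₁ M₂ M₃ M₄ := (Matrix.fromBlocks_toBlocks M).symm
    have key : ∀ A₀ ∈ C, ∀ A₁ ∈ C, ∀ B₀ ∈ D, ∀ B₁ ∈ D,
        Matrix.trace (M₁ * (A₀ + B₀)ᵀ) + Matrix.trace (M₂ * (a • (A₁ - B₁))ᵀ)
          + Matrix.trace (M₃ * (A₁ + B₁)ᵀ) + Matrix.trace (M₄ * (A₀ - B₀)ᵀ) = 0 := by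
      intro A₀ hA₀ A₁ hA₁ B₀ hB₀ B₁ hB₁
      have hmem : Matrix.fromBlocks (A₀ + B₀) (a • (A₁ - B₁)) (A₁ + B₁) (A₀ - B₀) ∈ P := by
        rw [← SetLike.mem_coe, hP]
        exact ⟨A₀, hA₀, A₁, hA₁, B₀, hB₀, B₁, hB₁, rfl⟩
      have := hM' _ hmem
      rw [hMeq, trBlocks] at this
      exact this
    have hC0 : M₁ + M₄ ∈ matDual C := by
      intro A hA
      have := key A hA 0 (zero_mem C) 0 (zero_mem D) 0 (zero_mem D)
      simpa [Matrix.add_mul, Matrix.trace_add] using this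
    have hC1 : a • M₂ + M₃ ∈ matDual C := by
      intro A hA
      have := key 0 (zero_mem C) A hA 0 (zero_mem D) 0 (zero_mem D)
      simp [Matrix.mul_smul, Matrix.smul_mul, Matrix.add_mul] at this ⊢
      linear_combination this
    have hD0 : M₁ - M₄ ∈ matDual D := by
      intro B hB
      have := key 0 (zero_mem C) 0 (zero_mem C) B hB 0 (zero_mem D)
      simp [Matrix.mul_smul, Matrix.smul_mul, Matrix.sub_mul] at this ⊢
      linear_combination this
    have hD1 : M₃ - a • M₂ ∈ matDual D := by
      intro B hB
      have := key 0 (zero_mem C) 0 (zero_mem C) 0 (zero_mem D) B hB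
      simp [Matrix.mul_smul, Matrix.smul_mul, Matrix.sub_mul] at this ⊢
      linear_combination this
    rw [← SetLike.mem_coe, hQ]
    refine ⟨(2:F)⁻¹ • (M₁ + M₄), Submodule.smul_mem _ _ hC0,
      (2:F)⁻¹ • (a • M₂ + M₃), Submodule.smul_mem _ _ hC1,
      (2:F)⁻¹ • (M₁ - M₄), Submodule.smul_mem _ _ hD0,
      (2:F)⁻¹ • (M₃ - a • M₂), Submodule.smul_mem _ _ hD1, ?_⟩
    have e1 : (2:F)⁻¹ • (M₁ + M₄) + (2:F)⁻¹ • (M₁ - M₄) = M₁ := by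
      rw [← smul_add]
      have h : (M₁ + M₄) + (M₁ - M₄) = (2:F) • M₁ := by module
      rw [h, smul_smul, inv_mul_cancel₀ h2, one_smul]
    have e4 : (2:F)⁻¹ • (M₁ + M₄) - (2:F)⁻¹ • (M₁ - M₄) = M₄ := by
      rw [← smul_sub]
      have h : (M₁ + M₄) - (M₁ - M₄) = (2:F) • M₄ := by module
      rw [h, smul_smul, inv_mul_cancel₀ h2, one_smul]
    have e3 : (2:F)⁻¹ • (a • M₂ + M₃) + (2:F)⁻¹ • (M₃ - a • M₂) = M₃ := by
      rw [← smul_add]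
      have h : (a • M₂ + M₃) + (M₃ - a • M₂) = (2:F) • M₃ := by module
      rw [h, smul_smul, inv_mul_cancel₀ h2, one_smul]
    have e2 : a⁻¹ • ((2:F)⁻¹ • (a • M₂ + M₃) - (2:F)⁻¹ • (M₃ - a • M₂)) = M₂ := by
      rw [← smul_sub]
      have h : (a • M₂ + M₃) - (M₃ - a • M₂) = (2:F) • a • M₂ := by module
      rw [h, smul_smul, smul_smul, smul_smul]
      have hc : a⁻¹ * 2⁻¹ * 2 * a = 1 := by field_simp
      rw [hc, one_smul]
    rw [e1, e2, e3, e4]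
    exact hMeq
  · intro hM
    rw [← SetLike.mem_coe, hQ] at hM
    obtain ⟨A₀', hA₀', A₁', hA₁', B₀', hB₀', B₁', hB₁', rfl⟩ := hM
    show ∀ B ∈ P, Matrix.trace (_ * Bᵀ) = 0
    intro N hN
    rw [← SetLike.mem_coe, hP] at hN
    obtain ⟨A₀, hA₀, A₁, hA₁, B₀, hB₀, B₁, hB₁, rfl⟩ := hN
    rw [trBlocks]
    have h1 : Matrix.trace (A₀' * A₀ᵀ) = 0 := hA₀' A₀ hA₀
    have h2' : Matrix.trace (A₁' * A₁ᵀ) = 0 := hA₁' A₁ hA₁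
    have h3 : Matrix.trace (B₀' * B₀ᵀ) = 0 := hB₀' B₀ hB₀
    have h4 : Matrix.trace (B₁' * B₁ᵀ) = 0 := hB₁' B₁ hB₁
    simp only [Matrix.transpose_add, Matrix.transpose_sub, Matrix.transpose_smul,
      Matrix.add_mul, Matrix.sub_mul, Matrix.mul_add, Matrix.mul_sub, Matrix.mul_smul,
      Matrix.smul_mul, Matrix.trace_add, Matrix.trace_sub, Matrix.trace_smul,
      smul_eq_mul, smul_smul]
    have hx : a⁻¹ * a = 1 := inv_mul_cancel₀ ha
    linear_combination (2:F) * h1 + (2:F) * h3 + (1 + a⁻¹ * a) * h2' + (1 + a⁻¹ * a) * h4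
      - ((A₁' * B₁ᵀ).trace + (B₁' * A₁ᵀ).trace) * hx
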